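/- (Hölder inequality for normed order ideals) Let E ⊆ S(m) be a normed order ideal of measurable functions on [0,∞), i.e. a linear subspace with a norm ‖·‖_E such that if x ∈ E, y ∈ S(m) and |y| ≤ |x| then y ∈ E and ‖y‖_E ≤ ‖x‖_E. Let r, p, q > 0 satisfy 1/r = 1/p + 1/q. If |x|^p ∈ E and |y|^q ∈ E, then |xy|^r ∈ E and ‖|xy|^r‖_E^{1/r} ≤ ‖|x|^p‖_E^{1/p} · ‖|y|^q‖_E^{1/q}. -/

import Mathlib

open scoped ENNReal
open MeasureTheory

noncomputable section

/-- A normed order ideal `E ⊆ S(m)` of measurable functions on `[0,∞)`: a linear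
subspace with a norm such that `f ∈ E` and `|g| ≤ |f|` (pointwise on `[0,∞)`) imply
`g ∈ E` and `‖g‖_E ≤ ‖f‖_E`. -/
structure NormedOrderIdeal where
  /-- membership in `E` -/
  mem : (ℝ → ℝ) → Prop
  /-- the norm `‖·‖_E` -/
  norm : (ℝ → ℝ) → ℝ
  mem_measurable : ∀ {f}, mem f → Measurable f
  zero_mem : mem 0
  add_mem : ∀ {f g}, mem f → mem g → mem (f + g)
  smul_mem : ∀ (c : ℝ) {f}, mem f → mem (c • f)
  norm_nonneg : ∀ {f}, mem f → 0 ≤ norm f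
  norm_triangle : ∀ {f g}, mem f → mem g → norm (f + g) ≤ norm f + norm g
  norm_smul : ∀ (c : ℝ) {f}, mem f → norm (c • f) = |c| * norm f
  /-- the order ideal property of `E` -/
  ideal : ∀ {f g}, mem f → Measurable g → (∀ s : ℝ, 0 ≤ s → |g s| ≤ |f s|) →
    mem g ∧ norm g ≤ norm f

/-! Weighted AM–GM `u^α v^β ≤ α u + β v`, applied pointwise to `f/l` and `g/m` with
`l = ‖f‖_E + ε` and `m = ‖g‖_E + ε`, dominates `f^α g^β` by an element of `E` of norm at most
`l^α m^β`; letting `ε → 0` gives `‖f^α g^β‖_E ≤ ‖f‖_E^α ‖g‖_E^β`. Hölder's inequality is the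
case `f = |x|^p`, `g = |y|^q`, `α = r/p`, `β = r/q`. -/

theorem Real.geom_mean_le_scaled_arith_mean2_weighted {α β u v l m : ℝ} (hα : 0 ≤ α)
    (hβ : 0 ≤ β) (hαβ : α + β = 1) (hu : 0 ≤ u) (hv : 0 ≤ v) (hl : 0 < l) (hm : 0 < m) :
    u ^ α * v ^ β ≤ l ^ α * m ^ β * (α / l * u + β / m * v) := by
  have hamgm := Real.geom_mean_le_arith_mean2_weighted hα hβ
    (div_nonneg hu hl.le) (div_nonneg hv hm.le) hαβ
  rw [Real.div_rpow hu hl.le, Real.div_rpow hv hm.le] at hamgm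
  calc u ^ α * v ^ β = l ^ α * m ^ β * (u ^ α / l ^ α * (v ^ β / m ^ β)) := by
        field_simp
    _ ≤ l ^ α * m ^ β * (α * (u / l) + β * (v / m)) := by gcongr
    _ = l ^ α * m ^ β * (α / l * u + β / m * v) := by ring

namespace NormedOrderIdeal

variable (E : NormedOrderIdeal) {f g h : ℝ → ℝ}

theorem mem_and_norm_le_of_le (hf : E.mem f) (hh : Measurable h) (hh0 : ∀ s, 0 ≤ h s)
    (hhf : ∀ s, h s ≤ f s) : E.mem h ∧ E.norm h ≤ E.norm f :=
  E.ideal hf hh fun s _ => by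
    rw [abs_of_nonneg (hh0 s)]
    exact (hhf s).trans (le_abs_self _)

theorem smul_add_smul_mem {a b : ℝ} (hf : E.mem f) (hg : E.mem g) : E.mem (a • f + b • g) :=
  E.add_mem (E.smul_mem a hf) (E.smul_mem b hg)

theorem norm_smul_add_smul_le {a b : ℝ} (ha : 0 ≤ a) (hb : 0 ≤ b) (hf : E.mem f)
    (hg : E.mem g) : E.norm (a • f + b • g) ≤ a * E.norm f + b * E.norm g := by
  calc E.norm (a • f + b • g) ≤ E.norm (a • f) + E.norm (b • g) :=
        E.norm_triangle (E.smul_mem a hf) (E.smul_mem b hg)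
    _ = a * E.norm f + b * E.norm g := by
        rw [E.norm_smul a hf, E.norm_smul b hg, abs_of_nonneg ha, abs_of_nonneg hb]

section GeomMean

variable {α β : ℝ} (hα : 0 ≤ α) (hβ : 0 ≤ β) (hαβ : α + β = 1) (hf : E.mem f) (hg : E.mem g)
  (hf0 : ∀ s, 0 ≤ f s) (hg0 : ∀ s, 0 ≤ g s)
include hα hβ hαβ hf hg hf0 hg0

theorem geomMean_mem_and_norm_le_add {ε : ℝ} (hε : 0 < ε) :
    E.mem (fun s => f s ^ α * g s ^ β) ∧
      E.norm (fun s => f s ^ α * g s ^ β) ≤ (E.norm f + ε) ^ α * (E.norm g + ε) ^ β := by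
  set l := E.norm f + ε
  set m := E.norm g + ε
  have hl : 0 < l := by have := E.norm_nonneg hf; positivity
  have hm : 0 < m := by have := E.norm_nonneg hg; positivity
  set k := (α / l) • f + (β / m) • g
  have hk : E.mem k := E.smul_add_smul_mem hf hg
  have hk_norm : E.norm k ≤ 1 := by
    have hfl : E.norm f / l ≤ 1 := (div_le_one hl).2 (by linarith)
    have hgm : E.norm g / m ≤ 1 := (div_le_one hm).2 (by linarith)
    calc E.norm k ≤ α / l * E.norm f + β / m * E.norm g :=
          E.norm_smul_add_smul_le (by positivity) (by positivity) hf hg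
      _ = α * (E.norm f / l) + β * (E.norm g / m) := by ring
      _ ≤ α * 1 + β * 1 := by gcongr
      _ = 1 := by linarith
  have hmeas : Measurable fun s => f s ^ α * g s ^ β :=
    ((E.mem_measurable hf).pow_const α).mul ((E.mem_measurable hg).pow_const β)
  obtain ⟨hmem, hle⟩ := E.mem_and_norm_le_of_le (E.smul_mem (l ^ α * m ^ β) hk) hmeas
    (fun s => by have := hf0 s; have := hg0 s; positivity)
    (fun s => Real.geom_mean_le_scaled_arith_mean2_weighted hα hβ hαβ (hf0 s) (hg0 s) hl hm)
  refine ⟨hmem, hle.trans ?_⟩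
  rw [E.norm_smul _ hk, abs_of_pos (by positivity)]
  exact mul_le_of_le_one_right (by positivity) hk_norm

theorem geomMean_mem_and_norm_le :
    E.mem (fun s => f s ^ α * g s ^ β) ∧
      E.norm (fun s => f s ^ α * g s ^ β) ≤ E.norm f ^ α * E.norm g ^ β := by
  refine ⟨(E.geomMean_mem_and_norm_le_add hα hβ hαβ hf hg hf0 hg0 one_pos).1, ?_⟩
  have hlim : Filter.Tendsto (fun ε => (E.norm f + ε) ^ α * (E.norm g + ε) ^ β)
      (nhdsWithin 0 (Set.Ioi 0)) (nhds (E.norm f ^ α * E.norm g ^ β)) := by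
    have hcont : Continuous fun ε => (E.norm f + ε) ^ α * (E.norm g + ε) ^ β :=
      ((Real.continuous_rpow_const hα).comp (continuous_const.add continuous_id)).mul
        ((Real.continuous_rpow_const hβ).comp (continuous_const.add continuous_id))
    simpa using (hcont.tendsto 0).mono_left nhdsWithin_le_nhds
  refine ge_of_tendsto hlim ?_
  filter_upwards [self_mem_nhdsWithin] with ε hε
  exact (E.geomMean_mem_and_norm_le_add hα hβ hαβ hf hg hf0 hg0 hε).2

end GeomMean

end NormedOrderIdeal

/-- Hölder inequality for normed order ideals: if `1/r = 1/p + 1/q`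
with `r, p, q > 0`, `|x|^p ∈ E` and `|y|^q ∈ E`, then `|xy|^r ∈ E` and
`‖|xy|^r‖^{1/r} ≤ ‖|x|^p‖^{1/p} ‖|y|^q‖^{1/q}`. -/
theorem holder_normed_order_ideal (E : NormedOrderIdeal)
    (r p q : ℝ) (hr : 0 < r) (hp : 0 < p) (hq : 0 < q) (hrpq : 1/r = 1/p + 1/q)
    (x y : ℝ → ℝ)
    (hx : E.mem fun s => |x s| ^ p) (hy : E.mem fun s => |y s| ^ q) :
    E.mem (fun s => |x s * y s| ^ r) ∧
      E.norm (fun s => |x s * y s| ^ r) ^ (1/r) ≤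
        E.norm (fun s => |x s| ^ p) ^ (1/p) * E.norm (fun s => |y s| ^ q) ^ (1/q) := by
  have hweights : r / p + r / q = 1 := by
    field_simp at hrpq ⊢
    linarith
  have hprod : (fun s => |x s * y s| ^ r) =
      fun s => (|x s| ^ p) ^ (r / p) * (|y s| ^ q) ^ (r / q) := by
    funext s
    rw [← Real.rpow_mul (abs_nonneg _), ← Real.rpow_mul (abs_nonneg _),
      mul_div_cancel₀ r hp.ne', mul_div_cancel₀ r hq.ne', abs_mul,
      Real.mul_rpow (abs_nonneg _) (abs_nonneg _)]
  obtain ⟨hmem, hle⟩ := E.geomMean_mem_and_norm_le (by positivity) (by positivity) hweights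
    hx hy (fun s => by positivity) (fun s => by positivity)
  rw [← hprod] at hmem hle
  refine ⟨hmem, ?_⟩
  have hA := E.norm_nonneg hx
  have hB := E.norm_nonneg hy
  calc E.norm (fun s => |x s * y s| ^ r) ^ (1/r)
      ≤ (E.norm (fun s => |x s| ^ p) ^ (r / p) * E.norm (fun s => |y s| ^ q) ^ (r / q)) ^ (1/r) :=
        Real.rpow_le_rpow (E.norm_nonneg hmem) hle (by positivity)
    _ = E.norm (fun s => |x s| ^ p) ^ (1/p) * E.norm (fun s => |y s| ^ q) ^ (1/q) := by
        rw [Real.mul_rpow (by positivity) (by positivity), ← Real.rpow_mul hA,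
          ← Real.rpow_mul hB]
        congr 2 <;> field_simp
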